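/- arXiv:math/0010219 — 5 statements merged into one kernel-verified Lean document; each statement's English description precedes it below -/
import Mathlib

section
/- Let n ≥ 4 and 1 ≤ k ≤ n−3, and let T_{n,k} be the tournament on {1,…,n} with back edges n → 1, …, n → k. A weight matrix Λ = (λ_{ij}) is (1,2)-symplectic for T_{n,k} if and only if λ_{ij} = λ_{i(i+1)} + λ_{(i+1)(i+2)} + ⋯ + λ_{(j−1)j} for all pairs 1 ≤ i < j ≤ n except the pairs (1,n), (2,n), …, (k,n), and for 2 ≤ i ≤ k one has λ_{in} = λ_{12} + λ_{23} + ⋯ + λ_{(i−1)i} + λ_{1n} (with λ_{1n} an unconstrained positive parameter). -/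
/-- In the tournament `T_{n,k}` on `{1,…,n}`, vertex `i` beats vertex `j`:
for `i < j` one has `i → j`, except that when `j = n` and `i ≤ k` instead `n → i`. -/
def Beats (n k i j : ℕ) : Prop :=
  (i < j ∧ ¬ (j = n ∧ i ≤ k)) ∨ (j < i ∧ i = n ∧ j ≤ k)

open Classical in
/-- The sign `ε_{ij}`: `1` if `i → j`, `-1` if `j → i`, `0` if `i = j`. -/
noncomputable def eps (n k i j : ℕ) : ℝ :=
  if Beats n k i j then 1 else if Beats n k j i then -1 else 0

/-- The coefficient `C_{ijl} = μ_{ij} - μ_{il} + μ_{jl}` where `μ_{ij} = ε_{ij} λ_{ij}`. -/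
noncomputable def Cco (n k : ℕ) (lam : ℕ → ℕ → ℝ) (i j l : ℕ) : ℝ :=
  eps n k i j * lam i j - eps n k i l * lam i l + eps n k j l * lam j l

/-- `lam` is a weight matrix on indices `1,…,n`: symmetric, zero diagonal,
positive off-diagonal entries. -/
def IsWeight (n : ℕ) (lam : ℕ → ℕ → ℝ) : Prop :=
  (∀ i j, lam i j = lam j i) ∧ (∀ i, lam i i = 0) ∧
  (∀ i j, 1 ≤ i → i ≤ n → 1 ≤ j → j ≤ n → i ≠ j → 0 < lam i j)

/-- `lam` is (1,2)-symplectic for `T_{n,k}`: `C_{ijl} = 0` for every triple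
`1 ≤ i < j < l ≤ n` which is not a 3-cycle of `T_{n,k}`, i.e. every triple
except those of the form `(i, j, n)` with `i ≤ k < j`. -/
def IsOneTwoSymplectic (n k : ℕ) (lam : ℕ → ℕ → ℝ) : Prop :=
  ∀ i j l, 1 ≤ i → i < j → j < l → l ≤ n →
    ¬ (l = n ∧ i ≤ k ∧ k < j) → Cco n k lam i j l = 0

lemma eps_fwd {n k i j : ℕ} (hij : i < j) (h : ¬ (j = n ∧ i ≤ k)) : eps n k i j = 1 := by
  have hb : Beats n k i j := Or.inl ⟨hij, h⟩
  simp [eps, hb]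

lemma eps_back {n k i : ℕ} (hik : i ≤ k) (hin : i < n) : eps n k i n = -1 := by
  have hb : Beats n k n i := Or.inr ⟨hin, rfl, hik⟩
  have hnb : ¬ Beats n k i n := by
    rintro (⟨h1, h2⟩ | ⟨h1, h2, h3⟩)
    · exact h2 ⟨rfl, hik⟩
    · omega
  simp [eps, hb, hnb]

/-- **Main theorem.** For `n ≥ 4` and `1 ≤ k ≤ n-3`, a weight matrix `Λ` is
(1,2)-symplectic for `T_{n,k}` iff `λ_{ij} = λ_{i(i+1)} + ⋯ + λ_{(j-1)j}` for all
pairs `1 ≤ i < j ≤ n` except `(1,n),…,(k,n)`, and `λ_{in} = λ_{12} + ⋯ + λ_{(i-1)i} + λ_{1n}`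
for `2 ≤ i ≤ k` (with `λ_{1n}` unconstrained). -/
theorem main_theorem (n k : ℕ) (hn : 4 ≤ n) (hk1 : 1 ≤ k) (hkn : k ≤ n - 3)
    (lam : ℕ → ℕ → ℝ) (hΛ : IsWeight n lam) :
    IsOneTwoSymplectic n k lam ↔
      ((∀ i j, 1 ≤ i → i < j → j ≤ n → ¬ (j = n ∧ i ≤ k) →
          lam i j = ∑ m ∈ Finset.Ico i j, lam m (m + 1)) ∧
       (∀ i, 2 ≤ i → i ≤ k →
          lam i n = (∑ m ∈ Finset.Ico 1 i, lam m (m + 1)) + lam 1 n)) := by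
  constructor
  · intro H
    have chain : ∀ j i, 1 ≤ i → i < j → j < n →
        lam i j = ∑ m ∈ Finset.Ico i j, lam m (m + 1) := by
      intro j
      induction j with
      | zero => intro i hi hij _; omega
      | succ j' ih =>
        intro i hi hij hjn
        rcases eq_or_lt_of_le (Nat.lt_succ_iff.mp hij) with h | h
        · subst h
          rw [Finset.sum_Ico_succ_top (le_refl i), Finset.Ico_self, Finset.sum_empty,
            zero_add]
        · have hC := H i j' (j' + 1) hi h (Nat.lt_succ_self _) (by omega)
            (by rintro ⟨h1, _, _⟩; omega)
          unfold Cco at hC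
          rw [eps_fwd h (by omega), eps_fwd hij (by omega),
            eps_fwd (Nat.lt_succ_self j') (by omega)] at hC
          rw [Finset.sum_Ico_succ_top (by omega : i ≤ j'), ← ih i hi h (by omega)]
          linarith
    constructor
    · intro i j hi hij hjn hexc
      by_cases hj : j = n
      · subst hj
        have hki : k < i := by
          by_contra h
          exact hexc ⟨rfl, by omega⟩
        rcases eq_or_lt_of_le (by omega : i ≤ j - 1) with h | h
        · have hn1 : j = i + 1 := by omega
          subst hn1
          rw [Finset.sum_Ico_succ_top (le_refl i), Finset.Ico_self, Finset.sum_empty,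
            zero_add]
        · have hC := H i (j - 1) j hi h (by omega) le_rfl
            (by rintro ⟨_, h1, _⟩; omega)
          unfold Cco at hC
          rw [eps_fwd h (by omega), eps_fwd hij (by omega),
            eps_fwd (by omega : j - 1 < j) (by omega)] at hC
          have hico : Finset.Ico i j = Finset.Ico i (j - 1 + 1) := by congr 1; omega
          rw [hico, Finset.sum_Ico_succ_top (by omega : i ≤ j - 1),
            ← chain (j - 1) i hi h (by omega)]
          have hj1 : (j - 1 : ℕ) + 1 = j := by omega
          rw [hj1]
          linarith
      · exact chain j i hi hij (by omega)
    · intro i h2i hik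
      have hin : i < n := by omega
      have hC := H 1 i n le_rfl (by omega) hin le_rfl
        (by rintro ⟨_, _, h1⟩; omega)
      unfold Cco at hC
      rw [eps_fwd (by omega : 1 < i) (by omega), eps_back hk1 (by omega),
        eps_back hik hin] at hC
      rw [← chain i 1 le_rfl (by omega) hin]
      linarith
  · rintro ⟨h1, h2⟩ i j l hi hij hjl hln hexc
    unfold Cco
    by_cases hl : l = n
    · subst hl
      have hor : k < i ∨ j ≤ k := by
        by_contra h
        push_neg at h
        exact hexc ⟨rfl, by omega, by omega⟩
      rcases hor with hki | hjk
      · rw [eps_fwd hij (by omega), eps_fwd hjl (by omega),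
          eps_fwd (by omega : i < l) (by omega)]
        rw [h1 i j hi hij (by omega) (by omega),
          h1 i l hi (by omega) le_rfl (by omega),
          h1 j l (by omega) hjl le_rfl (by omega)]
        have := Finset.sum_Ico_consecutive (fun m => lam m (m + 1))
          (le_of_lt hij) (le_of_lt hjl)
        linarith
      · have hjn : j < l := by omega
        rw [eps_fwd hij (by omega), eps_back (by omega : i ≤ k) (by omega),
          eps_back hjk hjn]
        rw [h1 i j hi hij (by omega) (by omega),
          h2 j (by omega) hjk]
        rcases eq_or_lt_of_le hi with h1' | h1'
        · rw [← h1']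
          ring
        · rw [h2 i (by omega) (by omega)]
          have := Finset.sum_Ico_consecutive (fun m => lam m (m + 1))
            (hi) (le_of_lt hij)
          linarith
    · have hln' : l < n := by omega
      rw [eps_fwd hij (by omega), eps_fwd hjl (by omega), eps_fwd (by omega : i < l) (by omega)]
      rw [h1 i j hi hij (by omega) (by omega),
        h1 i l hi (by omega) hln (by omega),
        h1 j l (by omega) hjl hln (by omega)]
      have := Finset.sum_Ico_consecutive (fun m => lam m (m + 1))
        (le_of_lt hij) (le_of_lt hjl)
      linarith
end

section
/- Let n ≥ 4 and let T_{n,1} be the tournament on {1,…,n} with the single back edge n → 1. A weight matrix Λ = (λ_{ij}) is (1,2)-symplectic for T_{n,1} if and only if λ_{ij} = λ_{i(i+1)} + λ_{(i+1)(i+2)} + ⋯ + λ_{(j−1)j} for all pairs 1 ≤ i < j ≤ n except the pair (1,n), with λ_{1n} an unconstrained positive parameter. -/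
/-- For `n ≥ 4`, a weight matrix `Λ` is (1,2)-symplectic for `T_{n,1}` (single back
edge `n → 1`) iff `λ_{ij} = λ_{i(i+1)} + ⋯ + λ_{(j-1)j}` for all pairs
`1 ≤ i < j ≤ n` except `(1,n)`, with `λ_{1n}` unconstrained. -/
theorem family_k_one (n : ℕ) (hn : 4 ≤ n)
    (lam : ℕ → ℕ → ℝ) (hΛ : IsWeight n lam) :
    IsOneTwoSymplectic n 1 lam ↔
      (∀ i j, 1 ≤ i → i < j → j ≤ n → ¬ (j = n ∧ i = 1) →
        lam i j = ∑ m ∈ Finset.Ico i j, lam m (m + 1)) := by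
  have eps_one : ∀ i j : ℕ, 1 ≤ i → i < j → ¬(j = n ∧ i = 1) → eps n 1 i j = 1 := by
    intro i j hi hij h
    have hb : Beats n 1 i j := by
      left
      refine ⟨hij, ?_⟩
      rintro ⟨rfl, hi1⟩
      exact h ⟨rfl, le_antisymm hi1 hi⟩
    simp [eps, hb]
  constructor
  · intro hs i j hi hij hjn hex
    induction j with
    | zero => omega
    | succ m ih =>
      rcases Nat.lt_or_ge i m with him | him
      · have hmn : m < n := by omega
        have hexm : ¬(m = n ∧ i = 1) := by omega
        have hC := hs i m (m + 1) hi him (Nat.lt_succ_self m) hjn (by omega)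
        rw [Cco, eps_one i m hi him hexm, eps_one i (m + 1) hi (by omega) hex,
          eps_one m (m + 1) (by omega) (Nat.lt_succ_self m) (by omega)] at hC
        have hih := ih him hmn.le hexm
        rw [Finset.sum_Ico_succ_top (by omega : i ≤ m)]
        rw [hih] at hC
        linarith
      · have : m = i := by omega
        subst this
        rw [Finset.sum_Ico_succ_top (le_refl _), Finset.Ico_self, Finset.sum_empty, zero_add]
  · intro hf i j l hi hij hjl hln hnc
    have h1 : lam i j = ∑ m ∈ Finset.Ico i j, lam m (m + 1) :=
      hf i j hi hij (by omega) (by omega)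
    have h2 : lam i l = ∑ m ∈ Finset.Ico i l, lam m (m + 1) :=
      hf i l hi (hij.trans hjl) hln (by omega)
    have h3 : lam j l = ∑ m ∈ Finset.Ico j l, lam m (m + 1) :=
      hf j l (by omega) hjl hln (by omega)
    rw [Cco, eps_one i j hi hij (by omega), eps_one i l hi (hij.trans hjl) (by omega),
      eps_one j l (by omega) hjl (by omega), h1, h2, h3,
      ← Finset.sum_Ico_consecutive _ hij.le hjl.le]
    ring
end

section
/- Let n ≥ 5 and let T_{n,2} be the tournament on {1,…,n} with back edges n → 1 and n → 2. A weight matrix Λ = (λ_{ij}) is (1,2)-symplectic for T_{n,2} if and only if λ_{ij} = λ_{i(i+1)} + λ_{(i+1)(i+2)} + ⋯ + λ_{(j−1)j} for all pairs 1 ≤ i < j ≤ n except the pairs (1,n) and (2,n), and λ_{2n} = λ_{12} + λ_{1n} (with λ_{1n} an unconstrained positive parameter). -/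
lemma eps_one (n i j : ℕ) (h : i < j) (h2 : ¬(j = n ∧ i ≤ 2)) : eps n 2 i j = 1 := by
  unfold eps Beats
  rw [if_pos (Or.inl ⟨h, h2⟩)]

lemma eps_neg (n i : ℕ) (h : i < n) (h2 : i ≤ 2) : eps n 2 i n = -1 := by
  unfold eps Beats
  rw [if_neg, if_pos (Or.inr ⟨h, rfl, h2⟩)]
  rintro (⟨_, hc⟩ | ⟨h1, _⟩)
  · exact hc ⟨rfl, h2⟩
  · omega

/-- For `n ≥ 5`, a weight matrix `Λ` is (1,2)-symplectic for `T_{n,2}` (back edges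
`n → 1`, `n → 2`) iff `λ_{ij} = λ_{i(i+1)} + ⋯ + λ_{(j-1)j}` for all pairs
`1 ≤ i < j ≤ n` except `(1,n)` and `(2,n)`, and `λ_{2n} = λ_{12} + λ_{1n}`
(with `λ_{1n}` unconstrained). -/
theorem family_k_two (n : ℕ) (hn : 5 ≤ n)
    (lam : ℕ → ℕ → ℝ) (hΛ : IsWeight n lam) :
    IsOneTwoSymplectic n 2 lam ↔
      ((∀ i j, 1 ≤ i → i < j → j ≤ n → ¬ (j = n ∧ i ≤ 2) →
          lam i j = ∑ m ∈ Finset.Ico i j, lam m (m + 1)) ∧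
       lam 2 n = lam 1 2 + lam 1 n) := by
  constructor
  · intro hS
    constructor
    · have key : ∀ j i, 1 ≤ i → i < j → j ≤ n → ¬(j = n ∧ i ≤ 2) →
          lam i j = ∑ m ∈ Finset.Ico i j, lam m (m + 1) := by
        intro j
        induction j using Nat.strong_induction_on with
        | _ j ih =>
          intro i hi hij hjn hexc
          obtain ⟨m, rfl⟩ : ∃ m, j = m + 1 := ⟨j - 1, by omega⟩
          rcases eq_or_lt_of_le (Nat.succ_le_of_lt hij) with heq | hlt
          · have : i = m := by omega
            subst this
            rw [Finset.sum_Ico_succ_top le_rfl, Finset.Ico_self,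
              Finset.sum_empty, zero_add]
          · have him : i < m := by omega
            rw [Finset.sum_Ico_succ_top (by omega : i ≤ m)]
            have hmn : m + 1 = n ∨ m + 1 < n := by omega
            rcases hmn with heqn | hltn
            · have hi3 : 3 ≤ i := by
                by_contra h
                exact hexc ⟨heqn, by omega⟩
              have hC := hS i m (m + 1) hi him (by omega) hjn
                (by rintro ⟨h1, h2, _⟩; omega)
              unfold Cco at hC
              rw [eps_one n i m him (by omega), heqn,
                eps_one n i n (by omega) (by rintro ⟨_, h⟩; omega),
                eps_one n m n (by omega) (by rintro ⟨_, h⟩; omega)] at hC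
              have hrec := ih m (by omega) i hi him (by omega) (by rintro ⟨h, _⟩; omega)
              rw [heqn]
              linarith
            · have hC := hS i m (m + 1) hi him (by omega) hjn
                (by rintro ⟨h1, _, _⟩; omega)
              unfold Cco at hC
              rw [eps_one n i m him (by rintro ⟨h, _⟩; omega),
                eps_one n i (m + 1) (by omega) (by rintro ⟨h, _⟩; omega),
                eps_one n m (m + 1) (by omega) (by rintro ⟨h, _⟩; omega)] at hC
              have hrec := ih m (by omega) i hi him (by omega) (by rintro ⟨h, _⟩; omega)
              linarith
      exact fun i j hi hij hjn hexc => key j i hi hij hjn hexc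
    · have hC := hS 1 2 n (by omega) (by omega) (by omega) le_rfl
        (by rintro ⟨_, _, h⟩; omega)
      unfold Cco at hC
      rw [eps_one n 1 2 (by omega) (by rintro ⟨h, _⟩; omega),
        eps_neg n 1 (by omega) (by omega), eps_neg n 2 (by omega) (by omega)] at hC
      linarith
  · rintro ⟨hsum, h2n⟩ i j l hi hij hjl hln hexc
    unfold Cco
    by_cases hl : l = n
    · rw [hl]
      by_cases hj2 : j ≤ 2
      · obtain ⟨rfl, rfl⟩ : i = 1 ∧ j = 2 := by omega
        rw [eps_one n 1 2 (by omega) (by rintro ⟨h, _⟩; omega),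
          eps_neg n 1 (by omega) (by omega), eps_neg n 2 (by omega) (by omega)]
        linarith
      · have hi3 : 3 ≤ i := by
          by_contra h
          exact hexc ⟨hl, by omega, by omega⟩
        have hjn : j < n := by omega
        rw [eps_one n i j hij (by rintro ⟨h, _⟩; omega),
          eps_one n i n (by omega) (by rintro ⟨_, h⟩; omega),
          eps_one n j n hjn (by rintro ⟨_, h⟩; omega)]
        rw [hsum i j hi hij (by omega) (by rintro ⟨h, _⟩; omega),
          hsum i n hi (by omega) le_rfl (by rintro ⟨_, h⟩; omega),
          hsum j n (by omega) hjn le_rfl (by rintro ⟨_, h⟩; omega)]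
        rw [← Finset.sum_Ico_consecutive _ (le_of_lt hij) (le_of_lt hjn)]
        ring
    · rw [eps_one n i j hij (by rintro ⟨h, _⟩; omega),
        eps_one n i l (by omega) (by rintro ⟨h, _⟩; omega),
        eps_one n j l hjl (by rintro ⟨h, _⟩; omega)]
      rw [hsum i j hi hij (by omega) (by rintro ⟨h, _⟩; omega),
        hsum i l hi (by omega) hln (by rintro ⟨h, _⟩; omega),
        hsum j l (by omega) hjl hln (by rintro ⟨h, _⟩; omega)]
      rw [← Finset.sum_Ico_consecutive _ (le_of_lt hij) (le_of_lt hjl)]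
      ring
end

section
/- Let n ≥ 4 and 1 ≤ k ≤ n−3. For any positive real numbers t_1, …, t_{n−1}, s, define the symmetric matrix Λ = (λ_{ij}) by λ_{ij} = t_i + t_{i+1} + ⋯ + t_{j−1} for 1 ≤ i < j ≤ n, except that λ_{1n} = s and λ_{in} = t_1 + ⋯ + t_{i−1} + s for 2 ≤ i ≤ k (and λ_{ii} = 0). Then all off-diagonal entries of Λ are positive, Λ is (1,2)-symplectic for T_{n,k}, and the map (t_1,…,t_{n−1}, s) ↦ Λ is injective; in particular T_{n,k} admits an n-parameter family of (1,2)-symplectic weight matrices. -/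
/-- The weight matrix `Λ^k(t₁,…,t_{n-1},s)`: for `i < j`,
`λ_{ij} = t_i + ⋯ + t_{j-1}`, except `λ_{in} = t_1 + ⋯ + t_{i-1} + s` for
`1 ≤ i ≤ k` (so `λ_{1n} = s`); extended symmetrically, with zero diagonal. -/
noncomputable def famMatrix (n k : ℕ) (t : ℕ → ℝ) (s : ℝ) : ℕ → ℕ → ℝ :=
  fun i j =>
    let g : ℕ → ℕ → ℝ := fun a b =>
      if b = n ∧ a ≤ k then (∑ m ∈ Finset.Ico 1 a, t m) + s
      else ∑ m ∈ Finset.Ico a b, t m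
    if i < j then g i j else if j < i then g j i else 0

lemma eps_lt {n k i j : ℕ} (h : i < j) (hnot : ¬ (j = n ∧ i ≤ k)) :
    eps n k i j = 1 := by
  rw [eps, if_pos (show Beats n k i j from Or.inl ⟨h, hnot⟩)]

lemma eps_to_n {n k i : ℕ} (hi : i < n) (hik : i ≤ k) : eps n k i n = -1 := by
  rw [eps, if_neg (show ¬ Beats n k i n from ?_), if_pos (show Beats n k n i from Or.inr ⟨hi, rfl, hik⟩)]
  rintro (⟨_, hc⟩ | ⟨h, _⟩)
  · exact hc ⟨rfl, hik⟩
  · omega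

lemma fam_lt {n k : ℕ} {t : ℕ → ℝ} {s : ℝ} {i j : ℕ} (h : i < j)
    (hnot : ¬ (j = n ∧ i ≤ k)) :
    famMatrix n k t s i j = ∑ m ∈ Finset.Ico i j, t m := by
  simp only [famMatrix, if_pos h, if_neg hnot]

lemma fam_to_n {n k : ℕ} {t : ℕ → ℝ} {s : ℝ} {i : ℕ} (h : i < n) (hik : i ≤ k) :
    famMatrix n k t s i n = (∑ m ∈ Finset.Ico 1 i, t m) + s := by
  simp only [famMatrix, if_pos h]
  rw [if_pos ⟨trivial, hik⟩]


/-- For `n ≥ 4`, `1 ≤ k ≤ n-3` and positive parameters `t₁,…,t_{n-1}, s`, the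
matrix `famMatrix n k t s` is a weight matrix, it is (1,2)-symplectic for `T_{n,k}`,
and the assignment `(t₁,…,t_{n-1},s) ↦ Λ` is injective: `T_{n,k}` admits an
`n`-parameter family of (1,2)-symplectic weight matrices. -/
theorem family_of_symplectic_metrics (n k : ℕ) (hn : 4 ≤ n) (hk1 : 1 ≤ k)
    (hkn : k ≤ n - 3) (t : ℕ → ℝ) (s : ℝ)
    (ht : ∀ m, 1 ≤ m → m ≤ n - 1 → 0 < t m) (hs : 0 < s) :
    IsWeight n (famMatrix n k t s) ∧
    IsOneTwoSymplectic n k (famMatrix n k t s) ∧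
    (∀ t' : ℕ → ℝ, ∀ s' : ℝ, (∀ m, 1 ≤ m → m ≤ n - 1 → 0 < t' m) → 0 < s' →
      famMatrix n k t s = famMatrix n k t' s' →
      (∀ m, 1 ≤ m → m ≤ n - 1 → t m = t' m) ∧ s = s') := by
  simp only [IsWeight, IsOneTwoSymplectic, Cco]
  have hpos : ∀ i j : ℕ, 1 ≤ i → i < j → j ≤ n → 0 < ∑ m ∈ Finset.Ico i j, t m := by
    intro i j hi hij hj
    apply Finset.sum_pos
    · intro m hm
      rw [Finset.mem_Ico] at hm
      exact ht m (by omega) (by omega)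
    · exact ⟨i, Finset.mem_Ico.2 ⟨le_refl i, hij⟩⟩
  have hnonneg : ∀ i : ℕ, i ≤ n → 0 ≤ ∑ m ∈ Finset.Ico 1 i, t m := by
    intro i hi
    apply Finset.sum_nonneg
    intro m hm
    rw [Finset.mem_Ico] at hm
    exact le_of_lt (ht m hm.1 (by omega))
  have hsymm : ∀ i j, famMatrix n k t s i j = famMatrix n k t s j i := by
    intro i j
    rcases lt_trichotomy i j with h | h | h
    · simp only [famMatrix, if_pos h, if_neg (not_lt.2 (le_of_lt h))]
    · simp [famMatrix, h]
    · simp only [famMatrix, if_pos h, if_neg (not_lt.2 (le_of_lt h))]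
  -- positivity for i < j
  have hposfam : ∀ i j, 1 ≤ i → i < j → j ≤ n → 0 < famMatrix n k t s i j := by
    intro i j hi hij hj
    by_cases hc : j = n ∧ i ≤ k
    · obtain ⟨hj', hik⟩ := hc
      subst hj'
      rw [fam_to_n (by omega) hik]
      have := hnonneg i (by omega)
      linarith
    · rw [fam_lt hij hc]
      exact hpos i j hi hij hj
  refine ⟨⟨hsymm, fun i => by simp [famMatrix], fun i j hi hin hj hjn hne => ?_⟩, ?_, ?_⟩
  · rcases lt_or_gt_of_ne hne with h | h
    · exact hposfam i j hi h hjn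
    · rw [hsymm]; exact hposfam j i hj h hin
  · -- symplectic
    intro i j l hi hij hjl hln hnot
    by_cases hl : l = n
    · subst hl
      by_cases hjk : j ≤ k
      · have hik : i ≤ k := le_of_lt (lt_of_lt_of_le hij hjk)
        rw [eps_lt hij (by omega), eps_to_n (by omega) hik, eps_to_n (by omega) hjk,
          fam_lt hij (by omega), fam_to_n (by omega) hik, fam_to_n (by omega) hjk,
          ← Finset.sum_Ico_consecutive t (by omega : 1 ≤ i) (le_of_lt hij)]
        ring
      · have hik : ¬ i ≤ k := fun h => hnot ⟨rfl, h, by omega⟩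
        rw [eps_lt hij (by omega), eps_lt hjl (by omega), eps_lt (lt_trans hij hjl) (by omega),
          fam_lt hij (by omega), fam_lt hjl (by omega), fam_lt (lt_trans hij hjl) (by omega),
          ← Finset.sum_Ico_consecutive t (le_of_lt hij) (le_of_lt hjl)]
        ring
    · have hjn : j ≠ n := by omega
      rw [eps_lt hij (by omega), eps_lt hjl (by omega), eps_lt (lt_trans hij hjl) (by omega),
        fam_lt hij (by omega), fam_lt hjl (by omega), fam_lt (lt_trans hij hjl) (by omega),
        ← Finset.sum_Ico_consecutive t (le_of_lt hij) (le_of_lt hjl)]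
      ring
  · -- injectivity
    intro t' s' ht' hs' heq
    constructor
    · intro m hm1 hm2
      have h1 : famMatrix n k t s m (m+1) = famMatrix n k t' s' m (m+1) := by rw [heq]
      rw [fam_lt (by omega) (by omega), fam_lt (by omega) (by omega)] at h1
      simpa [Finset.sum_Ico_eq_sum_range] using h1
    · have h1 : famMatrix n k t s 1 n = famMatrix n k t' s' 1 n := by rw [heq]
      rw [fam_to_n (by omega) hk1, fam_to_n (by omega) hk1] at h1
      simpa using h1
end

section
/- Let n ≥ 4 and 1 ≤ k ≤ n−3. For any four distinct vertices of T_{n,k}, the induced 4-vertex subtournament is either transitive (i.e. its dominance relation is transitive, equivalently its scores are 0, 1, 2, 3) or irreducible (i.e. it contains a directed cycle through all four vertices). -/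
set_option maxHeartbeats 1600000 in
/-- For `n ≥ 4` and `1 ≤ k ≤ n-3`, every 4-vertex subtournament of `T_{n,k}` is
either transitive or irreducible (contains a directed cycle through its four
vertices). -/
theorem four_subtournaments (n k : ℕ) (hn : 4 ≤ n) (hk1 : 1 ≤ k) (hkn : k ≤ n - 3)
    (a b c d : ℕ) (ha1 : 1 ≤ a) (han : a ≤ n) (hb1 : 1 ≤ b) (hbn : b ≤ n)
    (hc1 : 1 ≤ c) (hcn : c ≤ n) (hd1 : 1 ≤ d) (hdn : d ≤ n)
    (hab : a ≠ b) (hac : a ≠ c) (had : a ≠ d) (hbc : b ≠ c) (hbd : b ≠ d)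
    (hcd : c ≠ d) :
    (∀ x ∈ ({a, b, c, d} : Finset ℕ), ∀ y ∈ ({a, b, c, d} : Finset ℕ),
      ∀ z ∈ ({a, b, c, d} : Finset ℕ),
        Beats n k x y → Beats n k y z → Beats n k x z) ∨
    (∃ w x y z : ℕ, ({w, x, y, z} : Finset ℕ) = ({a, b, c, d} : Finset ℕ) ∧
      Beats n k w x ∧ Beats n k x y ∧ Beats n k y z ∧ Beats n k z w) := by
  by_cases hmem : n ∈ ({a, b, c, d} : Finset ℕ)
  · by_cases h1 : ∀ v ∈ ({a, b, c, d} : Finset ℕ), v = n ∨ v ≤ k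
    · left
      intro x hx y hy z hz hxy hyz
      have Hx := h1 x hx; have Hy := h1 y hy; have Hz := h1 z hz
      have hx' : x ≤ n := by simp at hx; rcases hx with rfl|rfl|rfl|rfl <;> assumption
      have hy' : y ≤ n := by simp at hy; rcases hy with rfl|rfl|rfl|rfl <;> assumption
      have hz' : z ≤ n := by simp at hz; rcases hz with rfl|rfl|rfl|rfl <;> assumption
      unfold Beats at hxy hyz ⊢
      omega
    · by_cases h2 : ∀ v ∈ ({a, b, c, d} : Finset ℕ), v = n ∨ k < v
      · left
        intro x hx y hy z hz hxy hyz
        have Hx := h2 x hx; have Hy := h2 y hy; have Hz := h2 z hz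
        have hx' : x ≤ n := by simp at hx; rcases hx with rfl|rfl|rfl|rfl <;> assumption
        have hy' : y ≤ n := by simp at hy; rcases hy with rfl|rfl|rfl|rfl <;> assumption
        have hz' : z ≤ n := by simp at hz; rcases hz with rfl|rfl|rfl|rfl <;> assumption
        unfold Beats at hxy hyz ⊢
        omega
      · -- mixed case: a cycle exists
        right
        push_neg at h1 h2
        obtain ⟨u, hu, hun, huk⟩ := h1
        obtain ⟨v, hv, hvn, hvk⟩ := h2
        have huv : v ≤ k ∧ k < u := by omega
        have hun' : u < n := by
          have := hu; simp at this; rcases this with rfl|rfl|rfl|rfl <;> omega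
        have hvn' : v < n := by
          have := hv; simp at this; rcases this with rfl|rfl|rfl|rfl <;> omega
        have hcard4 : ({a, b, c, d} : Finset ℕ).card = 4 := by
          rw [Finset.card_insert_of_notMem (by simp [hab, hac, had]),
              Finset.card_insert_of_notMem (by simp [hbc, hbd]),
              Finset.card_insert_of_notMem (by simp [hcd]), Finset.card_singleton]
        have hsub : ({n, u, v} : Finset ℕ) ⊆ {a, b, c, d} := by
          intro t ht; simp only [Finset.mem_insert, Finset.mem_singleton] at ht
          rcases ht with rfl|rfl|rfl
          exacts [hmem, hu, hv]
        have h3 : ({n, u, v} : Finset ℕ).card ≤ 3 := by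
          have h1' := Finset.card_insert_le n ({u, v} : Finset ℕ)
          have h2' := Finset.card_insert_le u ({v} : Finset ℕ)
          have h3' : ({v} : Finset ℕ).card = 1 := Finset.card_singleton v
          omega
        have hpos : 0 < (({a, b, c, d} : Finset ℕ) \ {n, u, v}).card := by
          rw [Finset.card_sdiff_of_subset hsub, hcard4]; omega
        obtain ⟨m, hm⟩ := Finset.card_pos.mp hpos
        rw [Finset.mem_sdiff] at hm
        obtain ⟨hmset, hmout⟩ := hm
        simp only [Finset.mem_insert, Finset.mem_singleton] at hmout
        push_neg at hmout
        obtain ⟨hmn, hmu, hmv⟩ := hmout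
        have hmn' : m < n := by
          have := hmset; simp at this; rcases this with rfl|rfl|rfl|rfl <;> omega
        have hsub2 : ({n, u, v, m} : Finset ℕ) ⊆ {a, b, c, d} := by
          intro t ht; simp only [Finset.mem_insert, Finset.mem_singleton] at ht
          rcases ht with rfl|rfl|rfl|rfl
          exacts [hmem, hu, hv, hmset]
        have hc4 : ({n, u, v, m} : Finset ℕ).card = 4 := by
          have e1 : n ∉ ({u, v, m} : Finset ℕ) := by
            simp only [Finset.mem_insert, Finset.mem_singleton]; omega
          have e2 : u ∉ ({v, m} : Finset ℕ) := by
            simp only [Finset.mem_insert, Finset.mem_singleton]; omega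
          have e3 : v ∉ ({m} : Finset ℕ) := by
            simp only [Finset.mem_singleton]; omega
          rw [Finset.card_insert_of_notMem e1, Finset.card_insert_of_notMem e2,
              Finset.card_insert_of_notMem e3, Finset.card_singleton]
        have heq : ({n, u, v, m} : Finset ℕ) = {a, b, c, d} :=
          Finset.eq_of_subset_of_card_le hsub2 (by rw [hcard4, hc4])
        by_cases hm1 : m < v
        · refine ⟨n, m, v, u, ?_, ?_, ?_, ?_, ?_⟩
          · rw [← heq]; ext t; simp; tauto
          all_goals unfold Beats; omega
        · by_cases hm2 : m < u
          · refine ⟨n, v, m, u, ?_, ?_, ?_, ?_, ?_⟩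
            · rw [← heq]; ext t; simp; tauto
            all_goals unfold Beats; omega
          · refine ⟨n, v, u, m, ?_, ?_, ?_, ?_, ?_⟩
            · rw [← heq]; ext t; simp; tauto
            all_goals unfold Beats; omega
  · -- n not among the four vertices: induced tournament is transitive
    left
    intro x hx y hy z hz hxy hyz
    have hx' : x < n := by
      simp at hx
      rcases hx with rfl|rfl|rfl|rfl <;>
        · simp at hmem; omega
    have hy' : y < n := by
      simp at hy
      rcases hy with rfl|rfl|rfl|rfl <;>
        · simp at hmem; omega
    have hz' : z < n := by
      simp at hz
      rcases hz with rfl|rfl|rfl|rfl <;>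
        · simp at hmem; omega
    unfold Beats at hxy hyz ⊢
    omega
end
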